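/- arXiv:2404.08843 — 4 statements merged into one kernel-verified Lean document; each statement's English description precedes it below -/
import Mathlib

section
/- If V is a term idempotent variety of a plural type τ, then its regularization Ṽ (the variety defined by all regular identities true in V) is also term idempotent. -/
structure Alg (Ω : Type) (ar : Ω → ℕ) : Type 1 where
  carrier : Type
  interp : ∀ ω : Ω, (Fin (ar ω) → carrier) → carrier

inductive Term (Ω : Type) (ar : Ω → ℕ) (X : Type) : Type
  | var : X → Term Ω ar X
  | op : (ω : Ω) → (Fin (ar ω) → Term Ω ar X) → Term Ω ar X

variable {Ω : Type} {ar : Ω → ℕ} {X Y : Type}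

def Term.eval (A : Alg Ω ar) (v : X → A.carrier) : Term Ω ar X → A.carrier
  | .var x => v x
  | .op ω ts => A.interp ω fun i => (ts i).eval A v

def Term.subst (σ : X → Term Ω ar Y) : Term Ω ar X → Term Ω ar Y
  | .var x => σ x
  | .op ω ts => .op ω fun i => (ts i).subst σ

def Term.varSet : Term Ω ar X → Set X
  | .var x => {x}
  | .op _ ts => ⋃ i, (ts i).varSet

def Satisfies (A : Alg Ω ar) (p q : Term Ω ar X) : Prop :=
  ∀ v : X → A.carrier, p.eval A v = q.eval A v

/-- `V ⊨ p = q` for a class of algebras `V`. -/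
def VSat (V : Alg Ω ar → Prop) (p q : Term Ω ar X) : Prop :=
  ∀ A, V A → Satisfies A p q

/-- `p` is a term idempotent of `V`: `V ⊨ ω(p,…,p) = p` for every basic operation `ω`. -/
def TermIdem (V : Alg Ω ar → Prop) (p : Term Ω ar X) : Prop :=
  ∀ ω : Ω, VSat V (Term.op ω fun _ => p) p

/-- `V` is a term idempotent variety: both sides of every nontrivial identity it
satisfies are term idempotents of `V`. -/
def TermIdemVariety (V : Alg Ω ar → Prop) : Prop :=
  ∀ p q : Term Ω ar ℕ, VSat V p q → p ≠ q → TermIdem V p ∧ TermIdem V q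

def Models (A : Alg Ω ar) (E : Set (Term Ω ar ℕ × Term Ω ar ℕ)) : Prop :=
  ∀ e ∈ E, Satisfies A e.1 e.2

/-- The variety (equational class) defined by the set of identities `E`. -/
def VarietyOf (E : Set (Term Ω ar ℕ × Term Ω ar ℕ)) : Alg Ω ar → Prop :=
  fun A => Models A E

structure IsCongr (A : Alg Ω ar) (r : A.carrier → A.carrier → Prop) : Prop where
  refl : ∀ a, r a a
  symm : ∀ {a b}, r a b → r b a
  trans : ∀ {a b c}, r a b → r b c → r a c
  compat : ∀ (ω : Ω) (f g : Fin (ar ω) → A.carrier),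
    (∀ i, r (f i) (g i)) → r (A.interp ω f) (A.interp ω g)

/-- Quotient algebra of `A` by a (congruence) relation `r`. -/
noncomputable def Alg.quot (A : Alg Ω ar) (r : A.carrier → A.carrier → Prop) : Alg Ω ar where
  carrier := Quot r
  interp := fun ω f => Quot.mk r (A.interp ω fun i => (f i).out)

/-- `r` is the `W`-replica congruence of `A`: the smallest congruence whose quotient lies in `W`. -/
def IsReplica (W : Alg Ω ar → Prop) (A : Alg Ω ar) (r : A.carrier → A.carrier → Prop) : Prop :=
  IsCongr A r ∧ W (A.quot r) ∧
    ∀ s : A.carrier → A.carrier → Prop, IsCongr A s → W (A.quot s) →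
      ∀ a b, r a b → s a b

/-- The `r`-class of `a` is a subalgebra of `A`. -/
def ClassIsSub (A : Alg Ω ar) (r : A.carrier → A.carrier → Prop) (a : A.carrier) : Prop :=
  ∀ (ω : Ω) (f : Fin (ar ω) → A.carrier), (∀ i, r (f i) a) → r (A.interp ω f) a

/-- The `r`-class of `a` viewed as an algebra. -/
def classAlg (A : Alg Ω ar) (r : A.carrier → A.carrier → Prop) (a : A.carrier)
    (h : ClassIsSub A r a) : Alg Ω ar where
  carrier := {b : A.carrier // r b a}
  interp := fun ω f => ⟨A.interp ω fun i => (f i).1, h ω _ fun i => (f i).2⟩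

/-- The Mal'tsev product `V ∘ W`. -/
def MalProd (V W : Alg Ω ar → Prop) (A : Alg Ω ar) : Prop :=
  ∀ r : A.carrier → A.carrier → Prop, IsReplica W A r →
    ∀ (a : A.carrier) (h : ClassIsSub A r a), V (classAlg A r a h)

structure Hom (A B : Alg Ω ar) where
  toFun : A.carrier → B.carrier
  map : ∀ ω f, toFun (A.interp ω f) = B.interp ω fun i => toFun (f i)

def IsIdem (A : Alg Ω ar) (a : A.carrier) : Prop :=
  ∀ ω : Ω, A.interp ω (fun _ => a) = a

/-- The regularization of `V`: the class defined by all regular identities true in `V`. -/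
def Regularization {Ω : Type} {ar : Ω → ℕ} (V : Alg Ω ar → Prop) : Alg Ω ar → Prop :=
  fun A => ∀ p q : Term Ω ar ℕ, VSat V p q → p.varSet = q.varSet → Satisfies A p q

/-- if `V` is a term idempotent variety of a plural type, then its
regularization is term idempotent too. -/
theorem stmt_7 {Ω : Type} {ar : Ω → ℕ} (hτ : ∀ ω, 0 < ar ω) (hplural : ∃ ω, 1 < ar ω)
    (V : Alg Ω ar → Prop) (h : TermIdemVariety V) :
    TermIdemVariety (Regularization V) := by
  have hsub : ∀ A, V A → Regularization V A := by
    intro A hA p q hpq _ ; exact hpq A hA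
  intro p q hpq hne
  have hV : VSat V p q := fun A hA => hpq A (hsub A hA)
  obtain ⟨hp, hq⟩ := h p q hV hne
  have key : ∀ (r : Term Ω ar ℕ), TermIdem V r → TermIdem (Regularization V) r := by
    intro r hr ω A hA
    apply hA _ _ (hr ω)
    have : Nonempty (Fin (ar ω)) := ⟨⟨0, hτ ω⟩⟩
    simp [Term.varSet, Set.iUnion_const]
  exact ⟨key p hp, key q hq⟩
end

section
/- If a variety V is term idempotent and strongly irregular, then V is idempotent. -/
variable {Ω : Type} {ar : Ω → ℕ} {X Y : Type}

/-- a strongly irregular term idempotent variety is idempotent. -/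
theorem stmt_8 {Ω : Type} {ar : Ω → ℕ} (hτ : ∀ ω, 0 < ar ω)
    (V : Alg Ω ar → Prop) (t : Term Ω ar ℕ)
    (hvars : t.varSet = {0, 1})
    (hirr : VSat V t (.var 0))
    (hti : TermIdemVariety V) :
    TermIdem V (Term.var 0 : Term Ω ar ℕ) := by
  have hne : t ≠ Term.var 0 := by
    intro h
    rw [h] at hvars
    have h1 : (1 : ℕ) ∈ (Term.var 0 : Term Ω ar ℕ).varSet := by
      rw [hvars]; right; rfl
    simp [Term.varSet] at h1
  exact (hti t (Term.var 0) hirr hne).2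
end

section
/- For an algebra A and a variety W of the same type, the W-replica congruence ϱ of A coincides with the transitive closure of the relation ϱ⁰, where (a,b) ∈ ϱ⁰ iff there exist an identity p(x₁,...,xₙ) = q(x₁,...,xₙ) true in W and elements d₁,...,dₙ of A with a = p(d₁,...,dₙ) and b = q(d₁,...,dₙ). -/
variable {Ω : Type} {ar : Ω → ℕ} {X Y : Type}

/-- The relation `ϱ⁰`: `a ϱ⁰ b` iff `a` and `b` are values of the two sides of an
identity true in `W` at common arguments. -/
def Rel0 {Ω : Type} {ar : Ω → ℕ} (W : Alg Ω ar → Prop) (A : Alg Ω ar)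
    (a b : A.carrier) : Prop :=
  ∃ (p q : Term Ω ar ℕ) (v : ℕ → A.carrier),
    VSat W p q ∧ a = p.eval A v ∧ b = q.eval A v

section Helpers
variable {Ω : Type} {ar : Ω → ℕ}

theorem Term.eval_subst (A : Alg Ω ar) {X Y : Type} (σ : X → Term Ω ar Y)
    (u : Y → A.carrier) : ∀ t : Term Ω ar X,
    (t.subst σ).eval A u = t.eval A (fun x => (σ x).eval A u)
  | .var x => rfl
  | .op ω ts => by
    simp only [Term.subst, Term.eval]
    congr 1; funext i; exact Term.eval_subst A σ u (ts i)

theorem rel0_refl (W : Alg Ω ar → Prop) (A : Alg Ω ar) (a : A.carrier) :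
    Rel0 W A a a :=
  ⟨.var 0, .var 0, fun _ => a, fun _ _ _ => rfl, rfl, rfl⟩

theorem rel0_symm {W : Alg Ω ar → Prop} {A : Alg Ω ar} {a b : A.carrier}
    (h : Rel0 W A a b) : Rel0 W A b a := by
  obtain ⟨p, q, v, hpq, ha, hb⟩ := h
  exact ⟨q, p, v, fun B hB u => (hpq B hB u).symm, hb, ha⟩

theorem rel0_update {W : Alg Ω ar → Prop} {A : Alg Ω ar} (ω : Ω)
    (f : Fin (ar ω) → A.carrier) (i : Fin (ar ω)) {a b : A.carrier}
    (h : Rel0 W A a b) :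
    Rel0 W A (A.interp ω (Function.update f i a)) (A.interp ω (Function.update f i b)) := by
  obtain ⟨p, q, v, hpq, ha, hb⟩ := h
  refine ⟨.op ω (fun j => if j = i then p.subst (fun n => .var (n + ar ω)) else .var j.val),
          .op ω (fun j => if j = i then q.subst (fun n => .var (n + ar ω)) else .var j.val),
          fun n => if h : n < ar ω then f ⟨n, h⟩ else v (n - ar ω), ?_, ?_, ?_⟩
  · intro B hB u
    simp only [Term.eval]
    congr 1; funext j
    by_cases hj : j = i
    · subst hj
      rw [if_pos rfl, if_pos rfl, Term.eval_subst, Term.eval_subst]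
      exact hpq B hB _
    · rw [if_neg hj, if_neg hj]
  · rw [ha]
    simp only [Term.eval]
    congr 1
    funext j
    rcases eq_or_ne j i with hj | hj
    · subst hj
      rw [Function.update_self, if_pos rfl, Term.eval_subst]
      congr 1
      funext n
      show v n = Term.eval A _ (Term.var (n + ar ω))
      simp only [Term.eval]
      rw [dif_neg (by omega)]
      congr 1
      omega
    · rw [Function.update_of_ne hj, if_neg hj]
      show f j = _
      simp only [Term.eval]
      rw [dif_pos j.isLt]
  · rw [hb]
    simp only [Term.eval]
    congr 1
    funext j
    rcases eq_or_ne j i with hj | hj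
    · subst hj
      rw [Function.update_self, if_pos rfl, Term.eval_subst]
      congr 1
      funext n
      show v n = Term.eval A _ (Term.var (n + ar ω))
      simp only [Term.eval]
      rw [dif_neg (by omega)]
      congr 1
      omega
    · rw [Function.update_of_ne hj, if_neg hj]
      show f j = _
      simp only [Term.eval]
      rw [dif_pos j.isLt]

theorem quot_eval {A : Alg Ω ar} {r : A.carrier → A.carrier → Prop}
    (hr : IsCongr A r) (w : ℕ → A.carrier) : ∀ t : Term Ω ar ℕ,
    t.eval (A.quot r) (fun n => Quot.mk r (w n)) = Quot.mk r (t.eval A w)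
  | .var x => rfl
  | .op ω ts => by
    simp only [Term.eval, Alg.quot]
    apply Quot.sound
    apply hr.compat
    intro i
    have h1 := quot_eval hr w (ts i)
    have h2 : Quot.mk r (Quot.out ((ts i).eval (A.quot r) (fun n => Quot.mk r (w n))))
        = Quot.mk r ((ts i).eval A w) := by
      exact (Quot.out_eq _).trans h1
    have := Quot.eqvGen_exact h2
    exact (Equivalence.eqvGen_iff ⟨hr.refl, hr.symm, hr.trans⟩).mp this

theorem quot_exact {A : Alg Ω ar} {r : A.carrier → A.carrier → Prop}
    (hr : IsCongr A r) {a b : A.carrier} (h : Quot.mk r a = Quot.mk r b) : r a b :=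
  (Equivalence.eqvGen_iff ⟨hr.refl, hr.symm, hr.trans⟩).mp (Quot.eqvGen_exact h)

end Helpers

/-- the replica congruence of `A` for the variety defined by `E` is the
transitive closure of `ϱ⁰`. -/
theorem stmt_9 {Ω : Type} {ar : Ω → ℕ} (E : Set (Term Ω ar ℕ × Term Ω ar ℕ))
    (A : Alg Ω ar) :
    IsReplica (VarietyOf E) A (Relation.TransGen (Rel0 (VarietyOf E) A)) := by
  set W := VarietyOf E with hW
  set ρ := Relation.TransGen (Rel0 W A) with hρ
  have hcong : IsCongr A ρ := by
    refine ⟨fun a => .single (rel0_refl W A a), ?_, fun h1 h2 => h1.trans h2, ?_⟩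
    · intro a b h
      induction h with
      | single h => exact .single (rel0_symm h)
      | tail _ h ih => exact Relation.TransGen.head (rel0_symm h) ih
    · intro ω f g hfg
      have key : ∀ k : ℕ, k ≤ ar ω →
          ρ (A.interp ω f) (A.interp ω (fun j => if j.val < k then g j else f j)) := by
        intro k
        induction k with
        | zero =>
          intro _
          simp only [Nat.not_lt_zero, if_false]
          exact .single (rel0_refl W A _)
        | succ k ih =>
          intro hk
          have hk' : k < ar ω := hk
          set i : Fin (ar ω) := ⟨k, hk'⟩ with hi
          set h0 : Fin (ar ω) → A.carrier := fun j => if j.val < k then g j else f j with hh0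
          have e1 : Function.update h0 i (f i) = h0 := by
            funext j
            by_cases hj : j = i
            · subst hj; simp [hh0, hi]
            · rw [Function.update_of_ne hj]
          have e2 : Function.update h0 i (g i) = fun j => if j.val < k + 1 then g j else f j := by
            funext j
            by_cases hj : j = i
            · subst hj; simp [hh0, hi]
            · rw [Function.update_of_ne hj]
              have hne : j.val ≠ k := fun hc => hj (Fin.ext hc)
              simp only [hh0]
              by_cases hlt : j.val < k
              · rw [if_pos hlt, if_pos (by omega)]
              · rw [if_neg hlt, if_neg (by omega)]
          have step : ρ (A.interp ω (Function.update h0 i (f i)))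
              (A.interp ω (Function.update h0 i (g i))) :=
            Relation.TransGen.lift (fun x => A.interp ω (Function.update h0 i x))
              (fun a b hab => rel0_update ω h0 i hab) (f i) (g i) (hfg i)
          rw [e1, e2] at step
          exact (ih (le_of_lt hk')).trans step
      have := key (ar ω) le_rfl
      simpa only [Fin.is_lt, if_true] using this
  have hquot : W (A.quot ρ) := by
    intro e he v
    have hv : v = fun n => Quot.mk ρ ((v n).out) := funext fun n => (Quot.out_eq _).symm
    rw [hv, quot_eval hcong, quot_eval hcong]
    exact Quot.sound (.single ⟨e.1, e.2, _, fun B hB => hB e he, rfl, rfl⟩)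
  refine ⟨hcong, hquot, ?_⟩
  intro s hs hWs a b hab
  have base : ∀ {a b : A.carrier}, Rel0 W A a b → s a b := by
    intro a b h
    obtain ⟨p, q, v, hpq, ha, hb⟩ := h
    have := hpq (A.quot s) hWs (fun n => Quot.mk s (v n))
    rw [quot_eval hs, quot_eval hs] at this
    subst ha hb
    exact quot_exact hs this
  induction hab with
  | single h => exact base h
  | tail _ h ih => exact hs.trans ih (base h)
end

section
/- If V and W are nontrivial independent varieties of the same type (there is a term f(x,y) with V ⊨ f(x,y) = x and W ⊨ f(x,y) = y) and W is term idempotent, then V ∘ W is a variety; in particular, the Mal'tsev product LZ ∘ RZ of left-zero bands and right-zero bands is a variety. -/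
variable {Ω : Type} {ar : Ω → ℕ} {X Y : Type}

/-- A class of algebras is nontrivial if it contains an algebra with two distinct elements. -/
def Nontriv {Ω : Type} {ar : Ω → ℕ} (V : Alg Ω ar → Prop) : Prop :=
  ∃ A, V A ∧ ∃ a b : A.carrier, a ≠ b

def bmul (s t : Term Unit (fun _ : Unit => 2) ℕ) : Term Unit (fun _ : Unit => 2) ℕ :=
  .op () ![s, t]

/-- Left-zero bands: `xy = x`. -/
def LZ : Alg Unit (fun _ : Unit => 2) → Prop :=
  VarietyOf {(bmul (.var 0) (.var 1), .var 0)}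

/-- Right-zero bands: `xy = y`. -/
def RZ : Alg Unit (fun _ : Unit => 2) → Prop :=
  VarietyOf {(bmul (.var 0) (.var 1), .var 1)}

/-! ### Auxiliary lemmas -/

theorem eval_hom {A B : Alg Ω ar} (h : Hom A B) (t : Term Ω ar X) (v : X → A.carrier) :
    h.toFun (t.eval A v) = t.eval B (fun x => h.toFun (v x)) := by
  induction t with
  | var x => rfl
  | op ω ts ih =>
    show h.toFun (A.interp ω fun i => (ts i).eval A v) = B.interp ω fun i => (ts i).eval B _
    rw [h.map]
    congr 1
    funext i
    exact ih i

theorem mk_eq_iff {α : Type} {r : α → α → Prop} (hrefl : ∀ a, r a a)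
    (hsymm : ∀ {a b}, r a b → r b a) (htrans : ∀ {a b c}, r a b → r b c → r a c)
    {a b : α} : Quot.mk r a = Quot.mk r b ↔ r a b := by
  constructor
  · intro h
    have h2 : r a a = r a b := congrArg (Quot.lift (r a)
      (fun x y hxy => propext ⟨fun h' => htrans h' hxy, fun h' => htrans h' (hsymm hxy)⟩)) h
    exact h2 ▸ hrefl a
  · exact Quot.sound

theorem congr_mk_eq_iff {A : Alg Ω ar} {r : A.carrier → A.carrier → Prop}
    (hc : IsCongr A r) {a b : A.carrier} : Quot.mk r a = Quot.mk r b ↔ r a b :=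
  mk_eq_iff hc.refl (fun h => hc.symm h) (fun h h' => hc.trans h h')

/-- The quotient map as a homomorphism. -/
noncomputable def quotHom (A : Alg Ω ar) (r : A.carrier → A.carrier → Prop)
    (hc : IsCongr A r) : Hom A (A.quot r) where
  toFun := Quot.mk r
  map := by
    intro ω g
    show Quot.mk r (A.interp ω g) = Quot.mk r (A.interp ω fun i => (Quot.mk r (g i)).out)
    exact (congr_mk_eq_iff hc).2 (hc.compat ω _ _ fun i =>
      hc.symm ((congr_mk_eq_iff hc).1 (Quot.out_eq _)))

theorem eval_quot (A : Alg Ω ar) (r : A.carrier → A.carrier → Prop) (hc : IsCongr A r)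
    (t : Term Ω ar X) (w : X → A.carrier) :
    t.eval (A.quot r) (fun x => Quot.mk r (w x)) = Quot.mk r (t.eval A w) :=
  (eval_hom (quotHom A r hc) t w).symm

theorem sat_quot_rel {A : Alg Ω ar} {r : A.carrier → A.carrier → Prop} (hc : IsCongr A r)
    {p q : Term Ω ar X} (hsat : Satisfies (A.quot r) p q) (w : X → A.carrier) :
    r (p.eval A w) (q.eval A w) := by
  have h1 := hsat (fun x => Quot.mk r (w x))
  rw [eval_quot A r hc, eval_quot A r hc] at h1
  exact (congr_mk_eq_iff hc).1 h1

theorem models_quot {A : Alg Ω ar} {r : A.carrier → A.carrier → Prop} (hc : IsCongr A r)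
    {E : Set (Term Ω ar ℕ × Term Ω ar ℕ)}
    (hE : ∀ e ∈ E, ∀ w : ℕ → A.carrier, r (e.1.eval A w) (e.2.eval A w)) :
    Models (A.quot r) E := by
  intro e he v
  have hv : v = fun n => Quot.mk r (v n).out := funext fun n => (Quot.out_eq _).symm
  rw [hv, eval_quot A r hc, eval_quot A r hc]
  exact Quot.sound (hE e he _)

theorem satisfies_image {A B : Alg Ω ar} (h : Hom A B) (hs : Function.Surjective h.toFun)
    {p q : Term Ω ar X} (hA : Satisfies A p q) : Satisfies B p q := by
  intro v
  obtain ⟨u, hu⟩ : ∃ u : X → A.carrier, ∀ x, h.toFun (u x) = v x :=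
    ⟨fun x => (hs (v x)).choose, fun x => (hs (v x)).choose_spec⟩
  have hv : v = fun x => h.toFun (u x) := funext fun x => (hu x).symm
  rw [hv, ← eval_hom, ← eval_hom, hA u]

/-- Inclusion of a class subalgebra. -/
def classHom (A : Alg Ω ar) (r : A.carrier → A.carrier → Prop) (a : A.carrier)
    (h : ClassIsSub A r a) : Hom (classAlg A r a h) A where
  toFun := Subtype.val
  map := fun ω g => rfl

/-- The binary operation induced by a term `f`. -/
def Fop (A : Alg Ω ar) (f : Term Ω ar ℕ) (x y : A.carrier) : A.carrier :=
  f.eval A (fun n => if n = 0 then x else y)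

theorem hom_Fop {A B : Alg Ω ar} (h : Hom A B) (f : Term Ω ar ℕ) (x y : A.carrier) :
    h.toFun (Fop A f x y) = Fop B f (h.toFun x) (h.toFun y) := by
  unfold Fop
  rw [eval_hom]
  congr 1
  funext n
  split <;> rfl

/-- Main lemma: the first conjunct of statement 14. -/
theorem main_aux (Ω : Type) (ar : Ω → ℕ) (har : ∀ ω, 0 < ar ω)
    (Ev Ew : Set (Term Ω ar ℕ × Term Ω ar ℕ)) (f : Term Ω ar ℕ)
    (hvar : f.varSet ⊆ {0, 1})
    (hNV : Nontriv (VarietyOf Ev)) (hNW : Nontriv (VarietyOf Ew))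
    (hfV : VSat (VarietyOf Ev) f (.var 0)) (hfW : VSat (VarietyOf Ew) f (.var 1))
    (hTI : TermIdemVariety (VarietyOf Ew))
    (A B : Alg Ω ar) (h : Hom A B) (hsurj : Function.Surjective h.toFun)
    (hA : MalProd (VarietyOf Ev) (VarietyOf Ew) A) :
    MalProd (VarietyOf Ev) (VarietyOf Ew) B := by
  classical
  -- `f` is not the variable 1, since `V` is nontrivial
  have hfne : f ≠ Term.var 1 := by
    intro hf
    obtain ⟨A₀, hA₀, a, b, hab⟩ := hNV
    have h1 := hfV A₀ hA₀ (fun n => if n = 0 then a else b)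
    rw [hf] at h1
    simp [Term.eval] at h1
    exact hab h1.symm
  -- `W` is an idempotent variety
  have hidem : ∀ (C : Alg Ω ar), VarietyOf Ew C → ∀ (ω : Ω) (c : C.carrier),
      C.interp ω (fun _ => c) = c := by
    intro C hC ω c
    exact (hTI f (.var 1) hfW hfne).2 ω C hC (fun _ => c)
  -- classes of congruences with `W`-quotient are subalgebras
  have hsub : ∀ (C : Alg Ω ar) (ρ : C.carrier → C.carrier → Prop) (hc : IsCongr C ρ),
      VarietyOf Ew (C.quot ρ) → ∀ a, ClassIsSub C ρ a := by
    intro C ρ hc hW a ω g hg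
    apply (congr_mk_eq_iff hc).1
    exact ((quotHom C ρ hc).map ω g).trans
      ((congrArg ((C.quot ρ).interp ω) (funext fun i => Quot.sound (hg i))).trans
        (hidem _ hW ω (Quot.mk ρ a)))
  -- the replica congruence of A
  set ρ : A.carrier → A.carrier → Prop :=
    fun a b => ∀ s, IsCongr A s → VarietyOf Ew (A.quot s) → s a b with hρdef
  have hρc : IsCongr A ρ :=
    { refl := fun a s hs _ => hs.refl a
      symm := fun hab s hs hW => hs.symm (hab s hs hW)
      trans := fun hab hbc s hs hW => hs.trans (hab s hs hW) (hbc s hs hW)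
      compat := fun ω g g' hg s hs hW => hs.compat ω g g' (fun i => hg i s hs hW) }
  have hρW : VarietyOf Ew (A.quot ρ) := by
    apply models_quot hρc
    intro e he w s hs hW
    exact sat_quot_rel hs (hW e he) w
  have hρrep : IsReplica (VarietyOf Ew) A ρ :=
    ⟨hρc, hρW, fun s hs hW a b hab => hab s hs hW⟩
  have hρsub : ∀ a, ClassIsSub A ρ a := hsub A ρ hρc hρW
  have hclassV : ∀ c, VarietyOf Ev (classAlg A ρ c (hρsub c)) :=
    fun c => hA ρ hρrep c (hρsub c)
  -- key properties of Fop
  have hFρ : ∀ x y, ρ (Fop A f x y) y := by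
    intro x y
    have h1 := sat_quot_rel hρc (hfW (A.quot ρ) hρW) (fun n => if n = 0 then x else y)
    have h2 : (Term.var 1 : Term Ω ar ℕ).eval A (fun n => if n = 0 then x else y) = y := by
      simp [Term.eval]
    rw [h2] at h1
    exact h1
  have hFcls : ∀ a b c, ρ a c → ρ b c → Fop A f a b = a := by
    intro a b c hac hbc
    have h1 := hfV _ (hclassV c)
      (fun n => if n = 0 then (⟨a, hac⟩ : {x : A.carrier // ρ x c}) else ⟨b, hbc⟩)
    have h2 := congrArg Subtype.val h1
    have h3 := eval_hom (classHom A ρ c (hρsub c)) f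
      (fun n => if n = 0 then (⟨a, hac⟩ : {x : A.carrier // ρ x c}) else ⟨b, hbc⟩)
    have h4 : (fun n : ℕ => ((if n = 0 then (⟨a, hac⟩ : {x : A.carrier // ρ x c})
        else ⟨b, hbc⟩) : {x : A.carrier // ρ x c}).val)
        = (fun n : ℕ => if n = 0 then a else b) := by
      funext n; split <;> rfl
    show f.eval A (fun n : ℕ => if n = 0 then a else b) = a
    rw [← h4]
    exact h3.symm.trans h2
  -- now prove MalProd for B
  intro r hrrep b₀ hCsub
  have hrc : IsCongr B r := hrrep.1
  have hrW : VarietyOf Ew (B.quot r) := hrrep.2.1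
  -- the pullback congruence
  set s : A.carrier → A.carrier → Prop := fun x y => r (h.toFun x) (h.toFun y) with hsdef
  have hsc : IsCongr A s :=
    { refl := fun a => hrc.refl _
      symm := fun hab => hrc.symm hab
      trans := fun hab hbc => hrc.trans hab hbc
      compat := by
        intro ω g g' hg
        show r (h.toFun (A.interp ω g)) (h.toFun (A.interp ω g'))
        rw [h.map, h.map]
        exact hrc.compat ω _ _ hg }
  have hsW : VarietyOf Ew (A.quot s) := by
    apply models_quot hsc
    intro e he w
    show r (h.toFun (e.1.eval A w)) (h.toFun (e.2.eval A w))
    rw [eval_hom h, eval_hom h]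
    exact sat_quot_rel hrc (hrW e he) _
  have hρs : ∀ a b, ρ a b → s a b := fun a b hab => hab s hsc hsW
  -- the pushforward congruence
  set t : B.carrier → B.carrier → Prop :=
    fun x y => ∃ a b, ρ a b ∧ h.toFun a = x ∧ h.toFun b = y with htdef
  have htc : IsCongr B t :=
    { refl := fun x => by
        obtain ⟨a, rfl⟩ := hsurj x
        exact ⟨a, a, hρc.refl a, rfl, rfl⟩
      symm := fun hab => by
        obtain ⟨a, b, hab', ha, hb⟩ := hab
        exact ⟨b, a, hρc.symm hab', hb, ha⟩
      trans := by
        rintro x y z ⟨a, b, hab, rfl, hb⟩ ⟨c, d, hcd, hc, rfl⟩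
        refine ⟨Fop A f a c, d, hρc.trans (hFρ a c) hcd, ?_, rfl⟩
        rw [hom_Fop, hc, ← hb, ← hom_Fop, hFcls a b b hab (hρc.refl b)]
      compat := by
        intro ω g g' hg
        choose a b hab ha hb using hg
        refine ⟨A.interp ω a, A.interp ω b, hρc.compat ω a b hab, ?_, ?_⟩
        · rw [h.map]; congr 1; funext i; exact ha i
        · rw [h.map]; congr 1; funext i; exact hb i }
  have htW : VarietyOf Ew (B.quot t) := by
    apply models_quot htc
    intro e he w
    choose u hu using fun n => hsurj (w n)
    have h1 : ρ (e.1.eval A u) (e.2.eval A u) := sat_quot_rel hρc (hρW e he) u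
    refine ⟨e.1.eval A u, e.2.eval A u, h1, ?_, ?_⟩ <;>
      · rw [eval_hom h]; congr 1; funext n; exact hu n
  have hrt : ∀ x y, r x y → t x y := hrrep.2.2 t htc htW
  -- find a ρ-class of A mapping onto the r-class of b₀
  obtain ⟨a₀, hb₀⟩ := hsurj b₀
  have hKV : VarietyOf Ev (classAlg A ρ a₀ (hρsub a₀)) := hclassV a₀
  let φ : Hom (classAlg A ρ a₀ (hρsub a₀)) (classAlg B r b₀ hCsub) :=
    { toFun := fun x => ⟨h.toFun x.1, hb₀ ▸ hρs x.1 a₀ x.2⟩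
      map := by
        intro ω g
        apply Subtype.ext
        show h.toFun (A.interp ω fun i => (g i).1) = B.interp ω fun i => h.toFun (g i).1
        rw [h.map] }
  have hφsurj : Function.Surjective φ.toFun := by
    rintro ⟨x, hx⟩
    have htx : t x b₀ := hrt x b₀ hx
    obtain ⟨a, b, hab, rfl, hb⟩ := htx
    refine ⟨⟨Fop A f a a₀, hFρ a a₀⟩, ?_⟩
    apply Subtype.ext
    show h.toFun (Fop A f a a₀) = h.toFun a
    rw [hom_Fop, hb₀, ← hb, ← hom_Fop, hFcls a b b hab (hρc.refl b)]
  intro e he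
  exact satisfies_image φ hφsurj (hKV e he)

/-! ### Lemmas for LZ ∘ RZ -/

theorem rz_idem (p : Term Unit (fun _ : Unit => 2) ℕ) : TermIdem RZ p := by
  intro ω A hA v
  have h1 : A.interp () (fun i => Term.eval A (fun _ => p.eval A v)
      (![Term.var 0, Term.var 1] i)) = p.eval A v :=
    hA (bmul (.var 0) (.var 1), .var 1) rfl (fun _ => p.eval A v)
  have h2 : (fun i => Term.eval A (fun _ => p.eval A v) (![Term.var 0, Term.var 1] i))
      = (fun _ : Fin 2 => p.eval A v) := by
    funext i
    fin_cases i <;> rfl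
  rw [h2] at h1
  show A.interp ω (fun _ => p.eval A v) = p.eval A v
  cases ω
  exact h1

theorem lz_nontriv : Nontriv LZ := by
  refine ⟨⟨Bool, fun _ g => g 0⟩, ?_, true, false, by simp⟩
  intro e he v
  rw [Set.mem_singleton_iff] at he
  subst he
  rfl

theorem rz_nontriv : Nontriv RZ := by
  refine ⟨⟨Bool, fun _ g => g 1⟩, ?_, true, false, by simp⟩
  intro e he v
  rw [Set.mem_singleton_iff] at he
  subst he
  rfl

theorem f0_varset : (bmul (.var 0) (.var 1)).varSet ⊆ ({0, 1} : Set ℕ) := by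
  intro x hx
  simp only [bmul, Term.varSet, Set.mem_iUnion] at hx
  obtain ⟨i, hi⟩ := hx
  fin_cases i <;> simp_all [Term.varSet]

/-- if `V` and `W` are nontrivial independent varieties with `W` term
idempotent, then `V ∘ W` is closed under homomorphic images (a variety); in
particular `LZ ∘ RZ` is a variety. -/
theorem stmt_14 :
    (∀ (Ω : Type) (ar : Ω → ℕ), (∀ ω, 0 < ar ω) →
      ∀ (Ev Ew : Set (Term Ω ar ℕ × Term Ω ar ℕ)) (f : Term Ω ar ℕ),
        f.varSet ⊆ {0, 1} →
        Nontriv (VarietyOf Ev) → Nontriv (VarietyOf Ew) →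
        VSat (VarietyOf Ev) f (.var 0) → VSat (VarietyOf Ew) f (.var 1) →
        TermIdemVariety (VarietyOf Ew) →
        ∀ (A B : Alg Ω ar) (h : Hom A B), Function.Surjective h.toFun →
          MalProd (VarietyOf Ev) (VarietyOf Ew) A →
          MalProd (VarietyOf Ev) (VarietyOf Ew) B) ∧
    (∀ (A B : Alg Unit (fun _ : Unit => 2)) (h : Hom A B), Function.Surjective h.toFun →
      MalProd LZ RZ A → MalProd LZ RZ B) := by
  constructor
  · exact main_aux
  · intro A B h hs hA
    exact main_aux Unit (fun _ => 2) (fun _ => by norm_num) _ _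
      (bmul (.var 0) (.var 1)) f0_varset lz_nontriv rz_nontriv
      (fun A' hA' => hA' _ rfl) (fun A' hA' => hA' _ rfl)
      (fun p q _ _ => ⟨rz_idem p, rz_idem q⟩) A B h hs hA
end
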